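/- Let p ∈ ℝ[x₁,…,x_k], let M be 100·deg(p) times the sum of absolute values of the coefficients of p, let g(x) = 2x² − x, let L: [0,1) → ℝ be Bollobás's piecewise linear function, and let R = {(x,y) ∈ [0,1]² : y ≥ L(x)}. Define q := p·Π_{i=1}^k (1−x_i)⁶ + M·Σ_{i=1}^k (y_i − g(x_i)). Then q(x₁,…,x_k,y₁,…,y_k) < 0 for some points with each (x_i,y_i) ∈ R if and only if p(x₁,…,x_k) < 0 for some x₁,…,x_k ∈ {1 − 1/n : n ∈ ℕ}. -/
import Mathlib


open MvPolynomial

/-- Bollobás's piecewise linear function `L` on `[0,1)`. -/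
noncomputable def bollobasL (x : ℝ) : ℝ :=
  ((3 * (⌊(1 - x)⁻¹⌋₊ : ℝ) ^ 2 - (⌊(1 - x)⁻¹⌋₊ : ℝ) - 2) /
      ((⌊(1 - x)⁻¹⌋₊ : ℝ) * ((⌊(1 - x)⁻¹⌋₊ : ℝ) + 1))) * x -
    2 * ((⌊(1 - x)⁻¹⌋₊ : ℝ) - 1) / ((⌊(1 - x)⁻¹⌋₊ : ℝ) + 1)

/-- The region `R` above the graph of `L` in the unit square. -/
def regionR : Set (ℝ × ℝ) :=
  {p | p.1 ∈ Set.Ico (0 : ℝ) 1 ∧ p.2 ∈ Set.Icc (0 : ℝ) 1 ∧ bollobasL p.1 ≤ p.2}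


open MvPolynomial Finset

namespace Stmt15Aux

/-- |s^n - s'^n| ≤ n|s-s'| on [0,1] -/
lemma pow_lip {s s' : ℝ} (hs0 : 0 ≤ s) (hs1 : s ≤ 1) (hs0' : 0 ≤ s') (hs1' : s' ≤ 1) (n : ℕ) :
    |s ^ n - s' ^ n| ≤ n * |s - s'| := by
  rw [← geom_sum₂_mul s s' n, abs_mul]
  gcongr
  calc |∑ i ∈ range n, s ^ i * s' ^ (n - 1 - i)| ≤ ∑ i ∈ range n, |s ^ i * s' ^ (n - 1 - i)| :=
        Finset.abs_sum_le_sum_abs _ _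
    _ ≤ ∑ _i ∈ range n, 1 := by
        refine Finset.sum_le_sum fun i _ => ?_
        rw [abs_mul, abs_pow, abs_pow, abs_of_nonneg hs0, abs_of_nonneg hs0']
        exact mul_le_one₀ (pow_le_one₀ hs0 hs1) (by positivity) (pow_le_one₀ hs0' hs1')
    _ = n := by simp

lemma mixed_pow {u v c : ℝ} (hu : 0 ≤ u) (hu' : u ≤ c) (hv : 0 ≤ v) (hv' : v ≤ c)
    (a b : ℕ) : u ^ a * v ^ b ≤ c ^ (a + b) := by
  have hc : 0 ≤ c := hu.trans hu'
  rw [pow_add]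
  exact mul_le_mul (pow_le_pow_left₀ hu hu' a) (pow_le_pow_left₀ hv hv' b) (pow_nonneg hv b)
    (pow_nonneg hc a)

lemma pow6_diff {u v c : ℝ} (hu : 0 ≤ u) (hu' : u ≤ c) (hv : 0 ≤ v) (hv' : v ≤ c) :
    |u ^ 6 - v ^ 6| ≤ 6 * c ^ 5 * |u - v| := by
  have key : u ^ 6 - v ^ 6 =
      (u ^ 5 + u ^ 4 * v ^ 1 + u ^ 3 * v ^ 2 + u ^ 2 * v ^ 3 + u ^ 1 * v ^ 4 + v ^ 5) * (u - v) := by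
    ring
  rw [key, abs_mul]
  gcongr
  have h0 := mixed_pow hu hu' hv hv' 5 0
  have h1 := mixed_pow hu hu' hv hv' 4 1
  have h2 := mixed_pow hu hu' hv hv' 3 2
  have h3 := mixed_pow hu hu' hv hv' 2 3
  have h4 := mixed_pow hu hu' hv hv' 1 4
  have h5 := mixed_pow hu hu' hv hv' 0 5
  simp only [pow_zero, one_mul, mul_one] at h0 h1 h2 h3 h4 h5
  rw [abs_of_nonneg (by positivity)]
  norm_num at h0 h1 h2 h3 h4 h5 ⊢
  linarith

lemma telescope (G : ℕ → ℝ) (n : ℕ) :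
    |G 0 - G n| ≤ ∑ j ∈ range n, |G j - G (j + 1)| := by
  induction n with
  | zero => simp
  | succ n ih =>
      rw [Finset.sum_range_succ]
      calc |G 0 - G (n + 1)| ≤ |G 0 - G n| + |G n - G (n + 1)| := abs_sub_le _ _ _
        _ ≤ _ := by linarith

end Stmt15Aux



open MvPolynomial Finset

namespace Stmt15Aux2

variable {k : ℕ}

noncomputable def S (p : MvPolynomial (Fin k) ℝ) : ℝ := ∑ m ∈ p.support, |p.coeff m|

lemma S_nonneg (p : MvPolynomial (Fin k) ℝ) : 0 ≤ S p :=
  Finset.sum_nonneg fun _ _ => abs_nonneg _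

lemma abs_eval_le (p : MvPolynomial (Fin k) ℝ) {z : Fin k → ℝ}
    (hz : ∀ j, 0 ≤ z j ∧ z j ≤ 1) : |eval z p| ≤ S p := by
  rw [eval_eq']
  refine (Finset.abs_sum_le_sum_abs _ _).trans (Finset.sum_le_sum fun m _ => ?_)
  rw [abs_mul]
  have h1 : |∏ i, z i ^ m i| ≤ 1 := by
    rw [Finset.abs_prod]
    refine Finset.prod_le_one (fun i _ => abs_nonneg _) fun i _ => ?_
    rw [abs_pow, abs_of_nonneg (hz i).1]
    exact pow_le_one₀ (hz i).1 (hz i).2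
  calc |coeff m p| * |∏ i, z i ^ m i| ≤ |coeff m p| * 1 :=
        mul_le_mul_of_nonneg_left h1 (abs_nonneg _)
    _ = |coeff m p| := mul_one _

lemma exp_le_deg {p : MvPolynomial (Fin k) ℝ} {m : Fin k →₀ ℕ} (hm : m ∈ p.support) (i : Fin k) :
    m i ≤ p.totalDegree := by
  refine le_trans ?_ (le_totalDegree hm)
  by_cases h : m i = 0
  · simp [h]
  · have hi : i ∈ m.support := Finsupp.mem_support_iff.mpr h
    exact Finset.single_le_sum (f := fun a => m a) (fun _ _ => Nat.zero_le _) hi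

lemma eval_update_lip (p : MvPolynomial (Fin k) ℝ) {z : Fin k → ℝ}
    (hz : ∀ j, 0 ≤ z j ∧ z j ≤ 1) (i : Fin k) {s s' : ℝ}
    (hs0 : 0 ≤ s) (hs1 : s ≤ 1) (hs0' : 0 ≤ s') (hs1' : s' ≤ 1) :
    |eval (Function.update z i s) p - eval (Function.update z i s') p|
      ≤ (p.totalDegree : ℝ) * S p * |s - s'| := by
  rw [eval_eq', eval_eq', ← Finset.sum_sub_distrib]
  refine (Finset.abs_sum_le_sum_abs _ _).trans ?_
  have key : ∀ m ∈ p.support,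
      |coeff m p * ∏ j, Function.update z i s j ^ m j -
        coeff m p * ∏ j, Function.update z i s' j ^ m j|
        ≤ |coeff m p| * ((p.totalDegree : ℝ) * |s - s'|) := by
    intro m hm
    have hfun : ∀ (t : ℝ), (fun j => Function.update z i t j ^ m j)
        = Function.update (fun j => z j ^ m j) i (t ^ m i) := by
      intro t
      funext j
      rcases eq_or_ne j i with rfl | hji
      · simp
      · simp [Function.update_of_ne hji]
    rw [hfun s, hfun s', Finset.prod_update_of_mem (Finset.mem_univ i),
      Finset.prod_update_of_mem (Finset.mem_univ i), ← mul_sub, ← sub_mul, abs_mul, abs_mul]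
    have hQ : |∏ j ∈ Finset.univ \ {i}, z j ^ m j| ≤ 1 := by
      rw [Finset.abs_prod]
      refine Finset.prod_le_one (fun j _ => abs_nonneg _) fun j _ => ?_
      rw [abs_pow, abs_of_nonneg (hz j).1]
      exact pow_le_one₀ (hz j).1 (hz j).2
    have hpow : |s ^ m i - s' ^ m i| ≤ (p.totalDegree : ℝ) * |s - s'| := by
      refine (Stmt15Aux.pow_lip hs0 hs1 hs0' hs1' (m i)).trans ?_
      have : (m i : ℝ) ≤ (p.totalDegree : ℝ) := by exact_mod_cast exp_le_deg hm i
      exact mul_le_mul_of_nonneg_right this (abs_nonneg _)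
    calc |coeff m p| * (|s ^ m i - s' ^ m i| * |∏ j ∈ Finset.univ \ {i}, z j ^ m j|)
        ≤ |coeff m p| * (((p.totalDegree : ℝ) * |s - s'|) * 1) := by
          refine mul_le_mul_of_nonneg_left ?_ (abs_nonneg _)
          exact mul_le_mul hpow hQ (abs_nonneg _) (by positivity)
      _ = |coeff m p| * ((p.totalDegree : ℝ) * |s - s'|) := by ring
  refine (Finset.sum_le_sum key).trans ?_
  rw [← Finset.sum_mul]
  rw [show (p.totalDegree : ℝ) * S p * |s - s'| = S p * ((p.totalDegree : ℝ) * |s - s'|) by ring]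
  exact le_of_eq rfl

end Stmt15Aux2


open MvPolynomial Finset Stmt15Aux Stmt15Aux2

namespace Stmt15Aux3

variable {k : ℕ}

noncomputable def F (p : MvPolynomial (Fin k) ℝ) (z : Fin k → ℝ) : ℝ :=
  eval z p * ∏ i, (1 - z i) ^ 6

lemma step_bound (p : MvPolynomial (Fin k) ℝ) {z : Fin k → ℝ}
    (hz : ∀ j, 0 ≤ z j ∧ z j ≤ 1) (i : Fin k) {s s' c : ℝ}
    (hs0 : 0 ≤ s) (hs1 : s ≤ 1) (hs0' : 0 ≤ s') (hs1' : s' ≤ 1)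
    (hc1 : c ≤ 1) (h1 : 1 - s ≤ c) (h2 : 1 - s' ≤ c) :
    |F p (Function.update z i s) - F p (Function.update z i s')|
      ≤ ((p.totalDegree : ℝ) + 6) * S p * (c ^ 5 * |s - s'|) := by
  have hc0 : 0 ≤ c := le_trans (by linarith) h1
  have hzs : ∀ j, 0 ≤ Function.update z i s j ∧ Function.update z i s j ≤ 1 := by
    intro j; rcases eq_or_ne j i with rfl | hji
    · simp [hs0, hs1]
    · simp [Function.update_of_ne hji, hz j]
  have hzs' : ∀ j, 0 ≤ Function.update z i s' j ∧ Function.update z i s' j ≤ 1 := by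
    intro j; rcases eq_or_ne j i with rfl | hji
    · simp [hs0', hs1']
    · simp [Function.update_of_ne hji, hz j]
  -- factor the product
  have hfun : ∀ (t : ℝ), (fun j => (1 - Function.update z i t j) ^ 6)
      = Function.update (fun j => (1 - z j) ^ 6) i ((1 - t) ^ 6) := by
    intro t; funext j
    rcases eq_or_ne j i with rfl | hji
    · simp
    · simp [Function.update_of_ne hji]
  have hprod : ∀ (t : ℝ), (∏ j, (1 - Function.update z i t j) ^ 6)
      = (1 - t) ^ 6 * ∏ j ∈ Finset.univ \ {i}, (1 - z j) ^ 6 := by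
    intro t
    calc (∏ j, (1 - Function.update z i t j) ^ 6)
        = ∏ j, Function.update (fun j => (1 - z j) ^ 6) i ((1 - t) ^ 6) j := by rw [hfun t]
      _ = (1 - t) ^ 6 * ∏ j ∈ Finset.univ \ {i}, (1 - z j) ^ 6 :=
          Finset.prod_update_of_mem (Finset.mem_univ i) _ _
  set Q : ℝ := ∏ j ∈ Finset.univ \ {i}, (1 - z j) ^ 6 with hQdef
  have hQ0 : 0 ≤ Q := Finset.prod_nonneg fun j _ => by positivity
  have hQ1 : Q ≤ 1 := by
    refine Finset.prod_le_one (fun j _ => by positivity) fun j _ => ?_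
    have := hz j
    exact pow_le_one₀ (by linarith [this.1, this.2]) (by linarith [this.1])
  set A : ℝ := eval (Function.update z i s) p
  set B : ℝ := eval (Function.update z i s') p
  have hFdiff : F p (Function.update z i s) - F p (Function.update z i s')
      = ((A - B) * (1 - s') ^ 6 + A * ((1 - s) ^ 6 - (1 - s') ^ 6)) * Q := by
    rw [F, F, hprod s, hprod s']; ring
  rw [hFdiff, abs_mul]
  have hAB : |A - B| ≤ (p.totalDegree : ℝ) * S p * |s - s'| :=
    eval_update_lip p hz i hs0 hs1 hs0' hs1'
  have hA : |A| ≤ S p := abs_eval_le p hzs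
  have hpow6 : |(1 - s) ^ 6 - (1 - s') ^ 6| ≤ 6 * c ^ 5 * |s - s'| := by
    have := pow6_diff (u := 1 - s) (v := 1 - s') (c := c) (by linarith) h1 (by linarith) h2
    have heq : |(1 - s) - (1 - s')| = |s - s'| := by
      rw [show (1 - s) - (1 - s') = -(s - s') by ring, abs_neg]
    rwa [heq] at this
  have h6 : (1 - s') ^ 6 ≤ c ^ 5 := by
    calc (1 - s') ^ 6 ≤ c ^ 6 := pow_le_pow_left₀ (by linarith) h2 6
      _ ≤ c ^ 5 := pow_le_pow_of_le_one hc0 hc1 (by norm_num)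
  have habs : |(A - B) * (1 - s') ^ 6 + A * ((1 - s) ^ 6 - (1 - s') ^ 6)|
      ≤ ((p.totalDegree : ℝ) + 6) * S p * (c ^ 5 * |s - s'|) := by
    calc |(A - B) * (1 - s') ^ 6 + A * ((1 - s) ^ 6 - (1 - s') ^ 6)|
        ≤ |(A - B) * (1 - s') ^ 6| + |A * ((1 - s) ^ 6 - (1 - s') ^ 6)| := abs_add_le _ _
      _ = |A - B| * (1 - s') ^ 6 + |A| * |(1 - s) ^ 6 - (1 - s') ^ 6| := by
          rw [abs_mul, abs_mul, abs_of_nonneg (by positivity : (0:ℝ) ≤ (1 - s') ^ 6)]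
      _ ≤ ((p.totalDegree : ℝ) * S p * |s - s'|) * c ^ 5 + S p * (6 * c ^ 5 * |s - s'|) := by
          refine add_le_add ?_ ?_
          · exact mul_le_mul hAB h6 (by positivity)
              (mul_nonneg (mul_nonneg (Nat.cast_nonneg _) (S_nonneg p)) (abs_nonneg _))
          · exact mul_le_mul hA hpow6 (abs_nonneg _) (S_nonneg p)
      _ = ((p.totalDegree : ℝ) + 6) * S p * (c ^ 5 * |s - s'|) := by ring
  calc |(A - B) * (1 - s') ^ 6 + A * ((1 - s) ^ 6 - (1 - s') ^ 6)| * |Q|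
      ≤ ((p.totalDegree : ℝ) + 6) * S p * (c ^ 5 * |s - s'|) * 1 := by
        refine mul_le_mul habs (by rwa [abs_of_nonneg hQ0]) (abs_nonneg _) ?_
        have hd : (0:ℝ) ≤ (p.totalDegree : ℝ) + 6 := by positivity
        exact mul_nonneg (mul_nonneg hd (S_nonneg p)) (by positivity)
    _ = _ := mul_one _

end Stmt15Aux3

namespace Stmt15Aux4

lemma floorT {x : ℝ} (h0 : 0 ≤ x) (h1 : x < 1) :
    1 ≤ (⌊(1 - x)⁻¹⌋₊ : ℝ) ∧ (⌊(1 - x)⁻¹⌋₊ : ℝ) * (1 - x) ≤ 1 ∧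
      1 < ((⌊(1 - x)⁻¹⌋₊ : ℝ) + 1) * (1 - x) := by
  have hpos : 0 < 1 - x := by linarith
  have hge1 : (1:ℝ) ≤ (1 - x)⁻¹ := by
    rw [le_inv_comm₀ one_pos hpos, inv_one]
    linarith
  have hfl : (1:ℕ) ≤ ⌊(1 - x)⁻¹⌋₊ := Nat.le_floor (by exact_mod_cast hge1)
  have hT1 : (1:ℝ) ≤ (⌊(1 - x)⁻¹⌋₊ : ℝ) := by exact_mod_cast hfl
  have hle : (⌊(1 - x)⁻¹⌋₊ : ℝ) ≤ (1 - x)⁻¹ := Nat.floor_le (by positivity)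
  have hlt : (1 - x)⁻¹ < (⌊(1 - x)⁻¹⌋₊ : ℝ) + 1 := Nat.lt_floor_add_one _
  refine ⟨hT1, ?_, ?_⟩
  · have := mul_le_mul_of_nonneg_right hle hpos.le
    rwa [inv_mul_cancel₀ hpos.ne'] at this
  · have := mul_lt_mul_of_pos_right hlt hpos
    rwa [inv_mul_cancel₀ hpos.ne'] at this

lemma defect_eq {x : ℝ} (h0 : 0 ≤ x) (h1 : x < 1) :
    bollobasL x - (2 * x ^ 2 - x) =
      2 * (x - (1 - 1 / (⌊(1 - x)⁻¹⌋₊ : ℝ))) * ((1 - 1 / ((⌊(1 - x)⁻¹⌋₊ : ℝ) + 1)) - x) := by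
  obtain ⟨hT1, -, -⟩ := floorT h0 h1
  rw [bollobasL]
  set T : ℝ := (⌊(1 - x)⁻¹⌋₊ : ℝ) with hTdef
  have hT0 : T ≠ 0 := by linarith
  have hT0' : T + 1 ≠ 0 := by linarith
  have hTT : T * (T + 1) ≠ 0 := mul_ne_zero hT0 hT0'
  field_simp
  ring

lemma floor_at_node {n : ℕ} (hn : 1 ≤ n) : ⌊(1 - (1 - 1 / (n : ℝ)))⁻¹⌋₊ = n := by
  have : (1 - (1 - 1 / (n : ℝ))) = 1 / n := by ring
  rw [this, one_div, inv_inv, Nat.floor_natCast]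

lemma node_mem {n : ℕ} (hn : 1 ≤ n) :
    0 ≤ 1 - 1 / (n : ℝ) ∧ 1 - 1 / (n : ℝ) < 1 := by
  have hn' : (1:ℝ) ≤ n := by exact_mod_cast hn
  constructor
  · have : 1 / (n : ℝ) ≤ 1 := by
      rw [div_le_one (by linarith)]; exact hn'
    linarith
  · have : 0 < 1 / (n : ℝ) := by positivity
    linarith

lemma L_at_node {n : ℕ} (hn : 1 ≤ n) :
    bollobasL (1 - 1 / (n : ℝ)) = 2 * (1 - 1 / (n : ℝ)) ^ 2 - (1 - 1 / (n : ℝ)) := by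
  obtain ⟨h0, h1⟩ := node_mem hn
  have := defect_eq h0 h1
  rw [floor_at_node hn] at this
  have hz : (1 - 1 / (n : ℝ)) - (1 - 1 / (n : ℝ)) = 0 := by ring
  rw [hz] at this
  linarith [this]

lemma g_node_mem {n : ℕ} (hn : 1 ≤ n) :
    0 ≤ 2 * (1 - 1 / (n : ℝ)) ^ 2 - (1 - 1 / (n : ℝ)) ∧
      2 * (1 - 1 / (n : ℝ)) ^ 2 - (1 - 1 / (n : ℝ)) ≤ 1 := by
  have hn' : (1:ℝ) ≤ n := by exact_mod_cast hn
  have hnpos : (0:ℝ) < n := by linarith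
  rcases eq_or_lt_of_le hn with h | h
  · have : (n : ℝ) = 1 := by exact_mod_cast h.symm
    rw [this]; norm_num
  · have h2 : (2:ℝ) ≤ n := by exact_mod_cast h
    have hxhalf : (1:ℝ)/2 ≤ 1 - 1/(n:ℝ) := by
      have : 1 / (n:ℝ) ≤ 1/2 := by
        rw [div_le_div_iff₀ hnpos (by norm_num)]; linarith
      linarith
    have hx1 : 1 - 1/(n:ℝ) < 1 := (node_mem hn).2
    constructor
    · nlinarith
    · nlinarith

end Stmt15Aux4


namespace Stmt15Aux4

lemma coord_snap {x : ℝ} (h0 : 0 ≤ x) (h1 : x < 1) :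
    ∃ (n : ℕ) (s' c : ℝ), 1 ≤ n ∧ s' = 1 - 1 / (n : ℝ) ∧ 0 ≤ s' ∧ s' < 1 ∧
      0 < c ∧ c ≤ 1 ∧ 1 - x ≤ c ∧ 1 - s' ≤ c ∧
      c ^ 5 * |x - s'| ≤ 2 * (bollobasL x - (2 * x ^ 2 - x)) := by
  obtain ⟨hT1, hA, hB⟩ := floorT h0 h1
  set T : ℝ := (⌊(1 - x)⁻¹⌋₊ : ℝ) with hTdef
  have hTpos : 0 < T := by linarith
  have hT1pos : 0 < T + 1 := by linarith
  set a : ℝ := 1 - 1 / T with hadef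
  set b : ℝ := 1 - 1 / (T + 1) with hbdef
  have ha : a ≤ x := by
    have h : 1 - x ≤ 1 / T := by rw [le_div_iff₀ hTpos]; nlinarith
    simp only [hadef]; linarith
  have hb : x < b := by
    have h : 1 / (T + 1) < 1 - x := by rw [div_lt_iff₀ hT1pos]; nlinarith
    simp only [hbdef]; linarith
  have hdef := defect_eq h0 h1
  rw [← hTdef, ← hadef, ← hbdef] at hdef
  have hc0 : (0:ℝ) < 1 / T := by positivity
  have hc1 : 1 / T ≤ 1 := by rw [div_le_one hTpos]; linarith
  have hcx : 1 - x ≤ 1 / T := by rw [le_div_iff₀ hTpos]; nlinarith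
  have hc5 : (1 / T) ^ 5 ≤ 1 / T ^ 2 := by
    calc (1 / T) ^ 5 ≤ (1 / T) ^ 2 := pow_le_pow_of_le_one hc0.le hc1 (by norm_num)
      _ = 1 / T ^ 2 := by rw [div_pow]; norm_num
  have hT2 : 1 / T ^ 2 ≤ 2 * (b - a) := by
    have hba : b - a = 1 / (T * (T + 1)) := by
      simp only [hadef, hbdef]; field_simp; ring
    rw [hba, show (2:ℝ) * (1 / (T * (T + 1))) = 2 / (T * (T + 1)) by ring,
      div_le_div_iff₀ (by positivity) (by positivity)]
    nlinarith
  have ha0 : 0 ≤ a := by simp only [hadef]; rw [sub_nonneg, div_le_one hTpos]; linarith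
  have hb1 : b < 1 := by
    simp only [hbdef]
    have : 0 < 1 / (T + 1) := by positivity
    linarith
  have hnnat : 1 ≤ ⌊(1 - x)⁻¹⌋₊ := by
    rw [hTdef] at hT1; exact_mod_cast hT1
  clear_value a b T
  by_cases hcase : x - a ≤ b - x
  · refine ⟨⌊(1 - x)⁻¹⌋₊, a, 1 / T, hnnat, by rw [hadef, hTdef], ha0, by linarith,
      hc0, hc1, hcx, by simp only [hadef]; linarith, ?_⟩
    rw [hdef, abs_of_nonneg (by linarith : (0:ℝ) ≤ x - a)]
    have hw : b - a ≤ 2 * (b - x) := by linarith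
    have hkey : (1 / T) ^ 5 ≤ 4 * (b - x) := by linarith
    nlinarith [mul_le_mul_of_nonneg_right hkey (by linarith : (0:ℝ) ≤ x - a)]
  · push_neg at hcase
    refine ⟨⌊(1 - x)⁻¹⌋₊ + 1, b, 1 / T, le_trans hnnat (Nat.le_succ _), ?_, by linarith, hb1,
      hc0, hc1, hcx, ?_, ?_⟩
    · rw [hbdef, hTdef]; push_cast; ring
    · simp only [hbdef]
      have : 1 / (T + 1) ≤ 1 / T := by
        rw [div_le_div_iff₀ hT1pos hTpos]; linarith
      linarith
    · rw [hdef, abs_of_nonpos (by linarith : x - b ≤ 0)]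
      have hw : b - a ≤ 2 * (x - a) := by linarith
      have hkey : (1 / T) ^ 5 ≤ 4 * (x - a) := by linarith
      nlinarith [mul_le_mul_of_nonneg_right hkey (by linarith : (0:ℝ) ≤ b - x)]

end Stmt15Aux4

open MvPolynomial Finset Stmt15Aux Stmt15Aux2 Stmt15Aux3 Stmt15Aux4

theorem stmt15 (k : ℕ) (p : MvPolynomial (Fin k) ℝ) :
    let M : ℝ := (100 * p.totalDegree : ℕ) * ∑ m ∈ p.support, |p.coeff m|
    ((∃ x y : Fin k → ℝ, (∀ i, (x i, y i) ∈ regionR) ∧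
        eval x p * (∏ i, (1 - x i) ^ 6) +
          M * (∑ i, (y i - (2 * (x i) ^ 2 - x i))) < 0) ↔
      (∃ x : Fin k → ℝ, (∀ i, ∃ n : ℕ, 1 ≤ n ∧ x i = 1 - 1 / (n : ℝ)) ∧
        eval x p < 0)) := by
  intro M
  have hM_eq : M = 100 * (p.totalDegree : ℝ) * S p := by
    show ((100 * p.totalDegree : ℕ) : ℝ) * ∑ m ∈ p.support, |p.coeff m| = _
    rw [S]; push_cast; ring
  constructor
  · -- hard direction
    rintro ⟨x, y, hxy, hq⟩
    have hx0 : ∀ i, 0 ≤ x i := fun i => (hxy i).1.1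
    have hx1 : ∀ i, x i < 1 := fun i => (hxy i).1.2
    have hLy : ∀ i, bollobasL (x i) ≤ y i := fun i => (hxy i).2.2
    by_cases hdeg : p.totalDegree = 0
    · -- constant polynomial case
      have hM0 : M = 0 := by rw [hM_eq, hdeg]; norm_num
      rw [hM0, zero_mul, add_zero] at hq
      have hPi : (0:ℝ) ≤ ∏ i, (1 - x i) ^ 6 := Finset.prod_nonneg fun i _ => by positivity
      have hev : eval x p < 0 := by
        by_contra h
        push_neg at h
        nlinarith [mul_nonneg h hPi]
      refine ⟨fun _ => 0, fun i => ⟨1, le_refl 1, by norm_num⟩, ?_⟩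
      have hconst : eval (fun _ => (0:ℝ)) p = eval x p := by
        rw [eval_eq', eval_eq']
        refine Finset.sum_congr rfl fun m hm => ?_
        have h := (totalDegree_eq_zero_iff _ p).mp hdeg m hm
        have h1 : ∀ (z : Fin k → ℝ), (∏ i, z i ^ m i) = 1 := fun z =>
          Finset.prod_eq_one fun i _ => by rw [h i, pow_zero]
        rw [h1, h1]
      rw [hconst]; exact hev
    · -- positive degree case
      have hd1 : (1:ℝ) ≤ (p.totalDegree : ℝ) := by
        exact_mod_cast Nat.one_le_iff_ne_zero.mpr hdeg
      have hS0 := S_nonneg p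
      have hM0 : 0 ≤ M := by rw [hM_eq]; positivity
      choose n s' c hn hs'eq hs'0 hs'1 hc0 hc1 hcx hcs hkey using
        fun i => coord_snap (hx0 i) (hx1 i)
      -- defect nonneg and ≤ y - g
      have hdef0 : ∀ i, 0 ≤ bollobasL (x i) - (2 * (x i) ^ 2 - x i) := by
        intro i
        have := hkey i
        nlinarith [abs_nonneg (x i - s' i), pow_pos (hc0 i) 5]
      have hDy : ∀ i, bollobasL (x i) - (2 * (x i) ^ 2 - x i) ≤ y i - (2 * (x i) ^ 2 - x i) :=
        fun i => by linarith [hLy i]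
      -- the interpolating sequence
      set z : ℕ → Fin k → ℝ := fun m j => if (j : ℕ) < m then s' j else x j with hzdef
      have hz0 : z 0 = x := by funext j; simp [hzdef]
      have hzk : z k = s' := by funext j; simp [hzdef, j.isLt]
      have hzmem : ∀ m j, 0 ≤ z m j ∧ z m j ≤ 1 := by
        intro m j
        simp only [hzdef]
        split_ifs
        · exact ⟨hs'0 j, (hs'1 j).le⟩
        · exact ⟨hx0 j, (hx1 j).le⟩
      -- per-step bound
      have hstep : ∀ j (hj : j < k),
          |F p (z j) - F p (z (j + 1))| ≤
            M * (y ⟨j, hj⟩ - (2 * (x ⟨j, hj⟩) ^ 2 - x ⟨j, hj⟩)) := by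
        intro j hj
        set i : Fin k := ⟨j, hj⟩ with hidef
        have hzi : z j i = x i := by simp [hzdef, hidef]
        have hz_eq1 : z j = Function.update (z j) i (x i) := by
          rw [← hzi, Function.update_eq_self]
        have hz_eq2 : z (j + 1) = Function.update (z j) i (s' i) := by
          funext l
          rw [Function.update_apply]
          split_ifs with h
          · subst h; simp [hzdef, hidef]
          · have hne : (l : ℕ) ≠ j := fun hc => h (Fin.ext (by simp [hidef, hc]))
            simp only [hzdef]
            have hiff : ((l : ℕ) < j + 1) ↔ ((l : ℕ) < j) := by omega
            rw [if_congr hiff rfl rfl]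
        have hb := step_bound p (hzmem j) i (hx0 i) (hx1 i).le (hs'0 i) (hs'1 i).le
          (hc1 i) (hcx i) (hcs i)
        rw [← hz_eq1, ← hz_eq2] at hb
        refine hb.trans ?_
        calc ((p.totalDegree : ℝ) + 6) * S p * (c i ^ 5 * |x i - s' i|)
            ≤ ((p.totalDegree : ℝ) + 6) * S p *
              (2 * (bollobasL (x i) - (2 * (x i) ^ 2 - x i))) := by
              refine mul_le_mul_of_nonneg_left (hkey i) ?_
              have : (0:ℝ) ≤ (p.totalDegree : ℝ) + 6 := by linarith
              exact mul_nonneg this hS0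
          _ ≤ M * (bollobasL (x i) - (2 * (x i) ^ 2 - x i)) := by
              rw [hM_eq]
              have h1 : ((p.totalDegree : ℝ) + 6) * S p * 2 ≤ 100 * (p.totalDegree : ℝ) * S p := by
                nlinarith
              nlinarith [hdef0 i]
          _ ≤ M * (y i - (2 * (x i) ^ 2 - x i)) :=
              mul_le_mul_of_nonneg_left (hDy i) hM0
      -- telescoping
      set g : ℕ → ℝ := fun j =>
        if h : j < k then M * (y ⟨j, h⟩ - (2 * (x ⟨j, h⟩) ^ 2 - x ⟨j, h⟩)) else 0 with hgdef
      have htel : |F p x - F p s'| ≤ M * ∑ i, (y i - (2 * (x i) ^ 2 - x i)) := by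
        have h1 := telescope (fun m => F p (z m)) k
        rw [hz0, hzk] at h1
        refine h1.trans ?_
        have h2 : ∑ j ∈ range k, |F p (z j) - F p (z (j + 1))| ≤ ∑ j ∈ range k, g j := by
          refine Finset.sum_le_sum fun j hj => ?_
          have hjk : j < k := Finset.mem_range.mp hj
          rw [hgdef]; simp only [dif_pos hjk]
          exact hstep j hjk
        refine h2.trans (le_of_eq ?_)
        rw [← Fin.sum_univ_eq_sum_range g k, Finset.mul_sum]
        refine Finset.sum_congr rfl fun i _ => ?_
        rw [hgdef]
        simp only [dif_pos i.isLt, Fin.eta]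
      -- conclude
      have hFx : F p x + M * ∑ i, (y i - (2 * (x i) ^ 2 - x i)) < 0 := hq
      have hFs' : F p s' < 0 := by
        have := abs_sub_comm (F p x) (F p s')
        have h3 : F p s' ≤ F p x + |F p x - F p s'| := by
          cases abs_cases (F p s' - F p x) with
          | inl h => nlinarith [h.1, (abs_sub_comm (F p s') (F p x)) ]
          | inr h => nlinarith [h.1, (abs_sub_comm (F p s') (F p x)) ]
        linarith
      have hPipos : (0:ℝ) < ∏ i, (1 - s' i) ^ 6 := by
        refine Finset.prod_pos fun i _ => ?_
        have h2 : (0:ℝ) < 1 - s' i := by linarith [hs'1 i]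
        positivity
      have hev : eval s' p < 0 := by
        rw [F] at hFs'
        by_contra h
        push_neg at h
        nlinarith
      exact ⟨s', fun i => ⟨n i, hn i, hs'eq i⟩, hev⟩
  · -- easy direction
    rintro ⟨x, hx, hev⟩
    refine ⟨x, fun i => 2 * (x i) ^ 2 - x i, ?_, ?_⟩
    · intro i
      obtain ⟨n, hn, hxi⟩ := hx i
      obtain ⟨h0, h1⟩ := node_mem hn
      obtain ⟨hg0, hg1⟩ := g_node_mem hn
      show (x i) ∈ Set.Ico (0:ℝ) 1 ∧ (2 * (x i) ^ 2 - x i) ∈ Set.Icc (0:ℝ) 1 ∧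
        bollobasL (x i) ≤ 2 * (x i) ^ 2 - x i
      rw [hxi]
      exact ⟨⟨h0, h1⟩, ⟨hg0, hg1⟩, le_of_eq (L_at_node hn)⟩
    · have hsum : (∑ i, ((2 * (x i) ^ 2 - x i) - (2 * (x i) ^ 2 - x i))) = 0 := by simp
      rw [hsum, mul_zero, add_zero]
      have hPipos : (0:ℝ) < ∏ i, (1 - x i) ^ 6 := by
        refine Finset.prod_pos fun i _ => ?_
        obtain ⟨n, hn, hxi⟩ := hx i
        have h1 := (node_mem hn).2
        rw [hxi]
        have : 0 < 1 - (1 - 1/(n:ℝ)) := by linarith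
        positivity
      exact mul_neg_of_neg_of_pos hev hPipos
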